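/- If M is a nontrivial Puiseux monoid admitting a transfer homomorphism to a block monoid B(G₀) over a subset G₀ of an abelian group G, then M is isomorphic to (ℕ₀, +). -/

import Mathlib

/-- The block monoid `B(G₀)` of zero-sum sequences over `G₀ ⊆ G`, realized as a
submonoid of the free abelian monoid `G₀ →₀ ℕ`. -/
noncomputable def blockMonoid {G : Type*} [AddCommGroup G] (G₀ : Set G) : AddSubmonoid (G₀ →₀ ℕ) where
  carrier := {f | (f.sum fun g n => n • (g : G)) = 0}
  zero_mem' := by simp
  add_mem' := by
    intro f g hf hg
    simp only [Set.mem_setOf_eq] at *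
    rw [Finsupp.sum_add_index' (by simp) (fun b m n => add_smul m n ((b : G₀) : G)), hf, hg,
      add_zero]

/-- A Puiseux monoid is an additive submonoid of the nonnegative rationals. -/
def IsPuiseux (M : AddSubmonoid ℚ) : Prop := ∀ x ∈ M, 0 ≤ x

/-- Transfer homomorphism between reduced additive monoids. -/
def IsTransferHomReduced {M N : Type*} [AddCommMonoid M] [AddCommMonoid N]
    (θ : M →+ N) : Prop :=
  Function.Surjective θ ∧ (∀ a : M, θ a = 0 → a = 0) ∧
    ∀ (a : M) (b₁ b₂ : N), θ a = b₁ + b₂ →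
      ∃ a₁ a₂ : M, a = a₁ + a₂ ∧ θ a₁ = b₁ ∧ θ a₂ = b₂

section StmtAux

variable {G : Type*} [AddCommGroup G] {G₀ : Set G}

/-- The sum-of-a-sequence homomorphism `(G₀ →₀ ℕ) →+ G`. -/
noncomputable def sigmaHom (G₀ : Set G) : (G₀ →₀ ℕ) →+ G :=
  Finsupp.liftAddHom fun g => (smulAddHom ℕ G).flip (g : G)

lemma sigmaHom_apply (f : G₀ →₀ ℕ) : sigmaHom G₀ f = f.sum fun g n => n • (g : G) := by
  simp [sigmaHom, Finsupp.liftAddHom_apply, Finsupp.sum]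

lemma mem_blockMonoid_iff {f : G₀ →₀ ℕ} : f ∈ blockMonoid G₀ ↔ sigmaHom G₀ f = 0 := by
  rw [sigmaHom_apply]; rfl

/-- The size homomorphism `(G₀ →₀ ℕ) →+ ℕ`. -/
noncomputable def szHom (G₀ : Set G) : (G₀ →₀ ℕ) →+ ℕ :=
  Finsupp.liftAddHom fun _ => AddMonoidHom.id ℕ

omit [AddCommGroup G] in
lemma szHom_eq_zero {f : G₀ →₀ ℕ} (h : szHom G₀ f = 0) : f = 0 := by
  ext g
  simp only [Finsupp.coe_zero, Pi.zero_apply]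
  by_contra hg
  have hmem : g ∈ f.support := Finsupp.mem_support_iff.mpr hg
  have : f g ≤ f.sum fun _ n => n :=
    Finset.single_le_sum (fun _ _ => Nat.zero_le _) hmem
  have hsz : szHom G₀ f = f.sum fun _ n => n := by
    simp [szHom, Finsupp.liftAddHom_apply, Finsupp.sum]
  rw [hsz] at h
  omega

/-- Atom (irreducible element) of a reduced additive commutative monoid. -/
def IsAtomOf' {A : Type*} [AddCommMonoid A] (x : A) : Prop :=
  x ≠ 0 ∧ ∀ a b : A, x = a + b → a = 0 ∨ b = 0

omit [AddCommGroup G] in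
/-- Every element of an additive submonoid of `G₀ →₀ ℕ` lies in the closure of
its atoms. -/
lemma mem_closure_atoms (B : AddSubmonoid (G₀ →₀ ℕ)) (x : ↥B) :
    x ∈ AddSubmonoid.closure {a : ↥B | IsAtomOf' a} := by
  set s := {a : ↥B | IsAtomOf' a}
  suffices H : ∀ N : ℕ, ∀ x : ↥B, szHom G₀ (x : G₀ →₀ ℕ) ≤ N →
      x ∈ AddSubmonoid.closure s from H _ x le_rfl
  intro N
  induction N with
  | zero =>
    intro x hx
    have h1 : (x : G₀ →₀ ℕ) = 0 := szHom_eq_zero (Nat.le_zero.mp hx)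
    have h2 : x = 0 := Subtype.ext h1
    rw [h2]; exact zero_mem _
  | succ N ih =>
    intro x hx
    by_cases h0 : x = 0
    · rw [h0]; exact zero_mem _
    by_cases hat : IsAtomOf' x
    · exact AddSubmonoid.subset_closure hat
    · unfold IsAtomOf' at hat
      push_neg at hat
      obtain ⟨a, b, hab, ha, hb⟩ := hat h0
      have hsum : szHom G₀ (a : G₀ →₀ ℕ) + szHom G₀ (b : G₀ →₀ ℕ)
          = szHom G₀ (x : G₀ →₀ ℕ) := by
        rw [← map_add]; congr 1; exact congrArg Subtype.val hab.symm
      have ha1 : 1 ≤ szHom G₀ (a : G₀ →₀ ℕ) := by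
        rcases Nat.eq_zero_or_pos (szHom G₀ (a : G₀ →₀ ℕ)) with h | h
        · exact absurd (Subtype.ext (szHom_eq_zero h)) ha
        · exact h
      have hb1 : 1 ≤ szHom G₀ (b : G₀ →₀ ℕ) := by
        rcases Nat.eq_zero_or_pos (szHom G₀ (b : G₀ →₀ ℕ)) with h | h
        · exact absurd (Subtype.ext (szHom_eq_zero h)) hb
        · exact h
      rw [hab]
      exact add_mem (ih a (by omega)) (ih b (by omega))

lemma coe_eq_zero {U : ↥(blockMonoid G₀)} (h : (U : G₀ →₀ ℕ) = 0) : U = 0 :=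
  Subtype.ext h

/-- Key sublemma: if `m • U = n • V` for atoms `U, V` of the block monoid with
`m, n` coprime, then `n = 1`. -/
lemma key_n_eq_one {U V : ↥(blockMonoid G₀)} (hU : IsAtomOf' U)
    {m n : ℕ} (hco : Nat.Coprime m n)
    (h : m • (U : G₀ →₀ ℕ) = n • (V : G₀ →₀ ℕ)) : n = 1 := by
  rcases Nat.eq_zero_or_pos n with hn0 | hnpos
  · subst hn0
    have hm1 : m = 1 := Nat.coprime_zero_right m |>.mp hco
    rw [hm1, one_smul, zero_smul] at h
    exact absurd (coe_eq_zero h) hU.1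
  by_contra hne
  have hn2 : 2 ≤ n := by omega
  have hdvd : ∀ g : G₀, n ∣ (U : G₀ →₀ ℕ) g := by
    intro g
    have := DFunLike.congr_fun h g
    simp only [Finsupp.smul_apply, smul_eq_mul] at this
    exact hco.symm.dvd_of_dvd_mul_left ⟨(V : G₀ →₀ ℕ) g, this⟩
  set W : G₀ →₀ ℕ := (U : G₀ →₀ ℕ).mapRange (· / n) (Nat.zero_div n) with hWdef
  have hnW : n • W = (U : G₀ →₀ ℕ) := by
    ext g
    simp only [Finsupp.smul_apply, hWdef, Finsupp.mapRange_apply, smul_eq_mul]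
    exact Nat.mul_div_cancel' (hdvd g)
  have hmW : m • W = (V : G₀ →₀ ℕ) := by
    ext g
    obtain ⟨c, hc⟩ := hdvd g
    have hg := DFunLike.congr_fun h g
    simp only [Finsupp.smul_apply, smul_eq_mul, hc] at hg ⊢
    simp only [hWdef, Finsupp.mapRange_apply, hc]
    rw [Nat.mul_div_cancel_left c hnpos]
    have : n * (m * c) = n * ((V : G₀ →₀ ℕ) g) := by
      rw [show n * (m * c) = m * (n * c) by ring]; exact hg
    exact (Nat.eq_of_mul_eq_mul_left hnpos this)
  have hnσ : n • sigmaHom G₀ W = 0 := by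
    rw [← map_nsmul, hnW]; exact mem_blockMonoid_iff.mp U.2
  have hmσ : m • sigmaHom G₀ W = 0 := by
    rw [← map_nsmul, hmW]; exact mem_blockMonoid_iff.mp V.2
  have hσ : sigmaHom G₀ W = 0 := by
    have hbez : (1 : ℤ) = m * Nat.gcdA m n + n * Nat.gcdB m n := by
      have := Nat.gcd_eq_gcd_ab m n
      rwa [hco, Nat.cast_one] at this
    calc sigmaHom G₀ W = (1 : ℤ) • sigmaHom G₀ W := (one_zsmul _).symm
      _ = (Nat.gcdA m n) • ((m:ℤ) • sigmaHom G₀ W)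
          + (Nat.gcdB m n) • ((n:ℤ) • sigmaHom G₀ W) := by
          rw [← mul_smul, ← mul_smul, ← add_smul, mul_comm (Nat.gcdA m n),
            mul_comm (Nat.gcdB m n), ← hbez]
      _ = 0 := by
          rw [natCast_zsmul, natCast_zsmul, hmσ, hnσ, smul_zero, smul_zero, add_zero]
  have hWB : W ∈ blockMonoid G₀ := mem_blockMonoid_iff.mpr hσ
  set W' : ↥(blockMonoid G₀) := ⟨W, hWB⟩ with hW'
  have hWne : W' ≠ 0 := by
    intro h0
    apply hU.1
    apply coe_eq_zero
    rw [← hnW]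
    have : W = 0 := congrArg Subtype.val h0
    rw [this, smul_zero]
  have hsplit : U = W' + (n - 1) • W' := by
    apply Subtype.ext
    push_cast [hW']
    rw [← hnW]
    rw [← succ_nsmul']
    congr 1
    omega
  rcases hU.2 _ _ hsplit with h1 | h2
  · exact hWne h1
  · apply hWne
    have h2' : ((n-1) • W' : ↥(blockMonoid G₀)) = 0 := h2
    have : (n-1) • W = 0 := by
      have := congrArg (Subtype.val) h2'
      exact this
    apply Subtype.ext
    simp only [hW']
    ext g
    have h3 := DFunLike.congr_fun this g
    simp only [Finsupp.smul_apply, smul_eq_mul, Finsupp.coe_zero, Pi.zero_apply] at h3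
    simp only [ZeroMemClass.coe_zero, Finsupp.coe_zero, Pi.zero_apply]
    rcases Nat.mul_eq_zero.mp h3 with h4 | h4
    · omega
    · exact h4

end StmtAux

/-- If a nontrivial Puiseux monoid admits a transfer homomorphism to a block
monoid `B(G₀)` over a subset `G₀` of an abelian group `G`, then it is
isomorphic to `(ℕ, +)`. -/
theorem stmt15 (M : AddSubmonoid ℚ) (hM : IsPuiseux M) (hMnt : M ≠ ⊥)
    (G : Type*) [AddCommGroup G] (G₀ : Set G)
    (θ : ↥M →+ ↥(blockMonoid G₀)) (hθ : IsTransferHomReduced θ) :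
    Nonempty (↥M ≃+ ℕ) := by
  obtain ⟨hsurj, hker, hsplit⟩ := hθ
  set AtM := {a : ↥M | IsAtomOf' a} with hAtM
  -- positivity of nonzero elements
  have hpos : ∀ u : ↥M, u ≠ 0 → 0 < (u : ℚ) := by
    intro u hu
    rcases lt_or_eq_of_le (hM u u.2) with h | h
    · exact h
    · exact absurd (Subtype.ext h.symm) hu
  -- atoms of M map to atoms of B
  have hmapatom : ∀ u : ↥M, IsAtomOf' u → IsAtomOf' (θ u) := by
    intro u hu
    constructor
    · intro h0; exact hu.1 (hker u h0)
    · intro a b hab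
      obtain ⟨a', b', hsum, ha', hb'⟩ := hsplit u a b hab
      rcases hu.2 a' b' hsum with h | h
      · left; rw [← ha', h, map_zero]
      · right; rw [← hb', h, map_zero]
  -- every element of M is in the closure of the atoms of M
  have hclM : ∀ x : ↥M, x ∈ AddSubmonoid.closure AtM := by
    intro x
    have key : ∀ (y : ↥(blockMonoid G₀)),
        y ∈ AddSubmonoid.closure {a : ↥(blockMonoid G₀) | IsAtomOf' a} →
        ∀ x : ↥M, θ x = y → x ∈ AddSubmonoid.closure AtM := by
      intro y hy
      induction hy using AddSubmonoid.closure_induction with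
      | mem y hy =>
        intro x hx
        apply AddSubmonoid.subset_closure
        refine ⟨?_, ?_⟩
        · intro h0
          apply hy.1
          rw [← hx, h0, map_zero]
        · intro a b hab
          have : θ a + θ b = y := by rw [← map_add, ← hab, hx]
          rcases hy.2 (θ a) (θ b) this.symm with h | h
          · left; exact hker a h
          · right; exact hker b h
      | zero =>
        intro x hx
        rw [hker x hx]
        exact zero_mem _
      | add y₁ y₂ hy₁ hy₂ ih₁ ih₂ =>
        intro x hx
        obtain ⟨a₁, a₂, hx12, h1, h2⟩ := hsplit x y₁ y₂ hx
        rw [hx12]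
        exact add_mem (ih₁ a₁ h1) (ih₂ a₂ h2)
    exact key (θ x) (mem_closure_atoms _ _) x rfl
  -- any two atoms of M are equal
  have huniq : ∀ u v : ↥M, IsAtomOf' u → IsAtomOf' v → u = v := by
    intro u v hu hv
    have hu0 : 0 < (u : ℚ) := hpos u hu.1
    have hv0 : 0 < (v : ℚ) := hpos v hv.1
    set r : ℚ := (u : ℚ) / (v : ℚ) with hrdef
    have hr : 0 < r := div_pos hu0 hv0
    set n : ℕ := r.num.toNat with hndef
    set m : ℕ := r.den with hmdef
    have hnum : (n : ℤ) = r.num := Int.toNat_of_nonneg (le_of_lt (Rat.num_pos.mpr hr))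
    have hnat : r.num.natAbs = n := by omega
    have hco : Nat.Coprime m n := by
      have h := r.reduced
      rw [hnat] at h
      exact h.symm
    have hm0 : (m : ℚ) ≠ 0 := by
      simp [hmdef, r.den_nz]
    have hmv : (u : ℚ) * (m : ℚ) = (n : ℚ) * (v : ℚ) := by
      have h2 : (u : ℚ) / (v : ℚ) = (n : ℚ) / (m : ℚ) := by
        rw [← hrdef]
        rw [show ((n : ℚ)) = ((r.num : ℤ) : ℚ) by exact_mod_cast congrArg (fun z : ℤ => (z : ℚ)) hnum]
        rw [hmdef]
        exact (Rat.num_div_den r).symm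
      exact (div_eq_div_iff (ne_of_gt hv0) hm0).mp h2
    have hsm : m • u = n • v := by
      apply Subtype.ext
      have c1 : ((m • u : ↥M) : ℚ) = m • (u : ℚ) := by
        exact map_nsmul M.subtype m u
      have c2 : ((n • v : ↥M) : ℚ) = n • (v : ℚ) := by
        exact map_nsmul M.subtype n v
      rw [c1, c2, nsmul_eq_mul, nsmul_eq_mul]
      rw [mul_comm] at hmv ⊢
      rw [mul_comm (n : ℚ)] at hmv
      linarith
    have hUat := hmapatom u hu
    have hVat := hmapatom v hv
    have hFB : m • ((θ u : ↥(blockMonoid G₀)) : G₀ →₀ ℕ)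
        = n • ((θ v : ↥(blockMonoid G₀)) : G₀ →₀ ℕ) := by
      have h1 : θ (m • u) = θ (n • v) := congrArg θ hsm
      rw [map_nsmul, map_nsmul] at h1
      have := congrArg Subtype.val h1
      simpa using this
    have hn1 : n = 1 := key_n_eq_one hUat hco hFB
    have hm1 : m = 1 := key_n_eq_one hVat hco.symm hFB.symm
    rw [hm1, hn1, one_smul, one_smul] at hsm
    exact hsm
  -- pick an atom q
  have hex : ∃ x : ↥M, x ≠ 0 := by
    by_contra h
    push_neg at h
    apply hMnt
    rw [AddSubmonoid.eq_bot_iff_forall]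
    intro y hy
    exact congrArg Subtype.val (h ⟨y, hy⟩)
  obtain ⟨x, hx⟩ := hex
  have hAne : AtM.Nonempty := by
    by_contra h
    rw [Set.not_nonempty_iff_eq_empty] at h
    have := hclM x
    rw [h, AddSubmonoid.closure_empty] at this
    exact hx (AddSubmonoid.mem_bot.mp this)
  obtain ⟨q, hq⟩ := hAne
  -- every element is a multiple of q
  have hall : ∀ y : ↥M, ∃ k : ℕ, k • q = y := by
    intro y
    have hsub : AtM ⊆ {q} := fun a ha => Set.mem_singleton_iff.mpr (huniq a q ha hq)
    have := AddSubmonoid.closure_mono hsub (hclM y)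
    exact AddSubmonoid.mem_closure_singleton.mp this
  set φ : ℕ →+ ↥M := multiplesHom (↥M) q with hφdef
  have hφ : ∀ k : ℕ, φ k = k • q := fun k => rfl
  have hinj : Function.Injective φ := by
    intro k l hkl
    have h1 : ((φ k : ↥M) : ℚ) = ((φ l : ↥M) : ℚ) := congrArg _ hkl
    rw [hφ, hφ] at h1
    have c1 : ((k • q : ↥M) : ℚ) = (k : ℚ) * (q : ℚ) := by
      have h2 := map_nsmul M.subtype k q
      simpa [nsmul_eq_mul] using h2
    have c2 : ((l • q : ↥M) : ℚ) = (l : ℚ) * (q : ℚ) := by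
      have h2 := map_nsmul M.subtype l q
      simpa [nsmul_eq_mul] using h2
    rw [c1, c2] at h1
    have hq0 : (q : ℚ) ≠ 0 := ne_of_gt (hpos q hq.1)
    exact_mod_cast mul_right_cancel₀ hq0 h1
  have hsur : Function.Surjective φ := by
    intro y
    obtain ⟨k, hk⟩ := hall y
    exact ⟨k, by rw [hφ]; exact hk⟩
  exact ⟨(AddEquiv.ofBijective φ ⟨hinj, hsur⟩).symm⟩
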